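/- Let ξ ∈ ℂ^r be nonsingular and let ν ∈ ℂ^s be such that (ξ,ν) is away from fences. Then for every λ ∈ 𝒟(ξ,ν) there exist an integer N ≥ 0 and elements λ^{(0)}, λ^{(1)}, …, λ^{(N)} ∈ ξ + ℤ^r such that λ^{(0)} = ξ, λ^{(N)} = λ, λ^{(j)} − λ^{(j−1)} ∈ ℰ for every 1 ≤ j ≤ N, and λ^{(j)} ∈ 𝒟(ξ,ν) for every 0 ≤ j ≤ N. -/
import Mathlib


set_option maxHeartbeats 1000000
set_option synthInstance.maxHeartbeats 400000

noncomputable section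

open scoped BigOperators

/-- A weight ξ ∈ ℂ^r is nonsingular if ξ_a ≠ 0 for all a, and ξ_a ≠ ±ξ_b for a ≠ b. -/
def Nonsingular {r : ℕ} (ξ : Fin r → ℂ) : Prop :=
  (∀ a, ξ a ≠ 0) ∧ ∀ a b, a ≠ b → ξ a ≠ ξ b ∧ ξ a ≠ -ξ b

/-- The pairing ⟨η,α⟩ = ∑_k η_k α_k on ℂ^r. -/
def pairing {r : ℕ} (η α : Fin r → ℂ) : ℂ := ∑ k, η k * α k

/-- Membership in Δ = {±e_i ± e_j : i < j} ∪ {±e_i}. -/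
def IsRootD {r : ℕ} (α : Fin r → ℂ) : Prop :=
  (∃ i j : Fin r, i < j ∧ ∃ σ τ : ℂ, (σ = 1 ∨ σ = -1) ∧ (τ = 1 ∨ τ = -1) ∧
    α = σ • (Pi.single i 1 : Fin r → ℂ) + τ • (Pi.single j 1 : Fin r → ℂ)) ∨
  (∃ i : Fin r, ∃ σ : ℂ, (σ = 1 ∨ σ = -1) ∧ α = σ • (Pi.single i 1 : Fin r → ℂ))

open Classical in
/-- The coroot α^∨: equal to α for α = ±e_i ± e_j, and to 2α for α = ±e_i. -/
def corootD {r : ℕ} (α : Fin r → ℂ) : Fin r → ℂ :=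
  if ∃ i : Fin r, ∃ σ : ℂ, (σ = 1 ∨ σ = -1) ∧ α = σ • (Pi.single i 1 : Fin r → ℂ) then
    (2 : ℂ) • α
  else α

/-- R⁺(ξ) = {α ∈ Δ : ⟨α^∨,ξ⟩ is a positive integer}. -/
def RplusD {r : ℕ} (ξ : Fin r → ℂ) : Set (Fin r → ℂ) :=
  {α | IsRootD α ∧ ∃ m : ℕ, 0 < m ∧ pairing (corootD α) ξ = (m : ℂ)}

/-- D(ξ)_> = {η : ⟨η,α⟩ is a positive real number for every α ∈ R⁺(ξ)}. -/
def DposD {r : ℕ} (ξ : Fin r → ℂ) : Set (Fin r → ℂ) :=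
  {η | ∀ α ∈ RplusD ξ, ∃ c : ℝ, 0 < c ∧ pairing η α = (c : ℂ)}

/-- Membership in the affine lattice ξ + ℤ^r. -/
def InLattice {r : ℕ} (ξ lam : Fin r → ℂ) : Prop :=
  ∃ m : Fin r → ℤ, lam = ξ + fun k => (m k : ℂ)

/-- Λ(ξ) = (ξ + ℤ^r) ∩ D(ξ)_>. -/
def LambdaD {r : ℕ} (ξ : Fin r → ℂ) : Set (Fin r → ℂ) :=
  {lam | InLattice ξ lam ∧ lam ∈ DposD ξ}

/-- z ∈ ℤ + ½, i.e. z is a real half-integer. -/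
def IsHalfInt (z : ℂ) : Prop := ∃ m : ℤ, z = (m : ℂ) + 1/2

/-- (ξ,ν) is away from fences: ξ_i + δν_j ∉ {½, −½} for every triple (i,j,δ) ∈ 𝒫(ξ,ν). -/
def AwayFromFences {r s : ℕ} (ξ : Fin r → ℂ) (ν : Fin s → ℂ) : Prop :=
  ∀ (i : Fin r) (j : Fin s) (δ : ℂ), (δ = 1 ∨ δ = -1) → IsHalfInt (ξ i + δ * ν j) →
    ξ i + δ * ν j ≠ 1/2 ∧ ξ i + δ * ν j ≠ -(1/2)

/-- The interleaving region 𝒟(ξ,ν) ⊆ Λ(ξ): for every (i,j,δ) ∈ 𝒫(ξ,ν), the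
half-integers λ_i + δν_j and ξ_i + δν_j have the same sign. -/
def DRegion {r s : ℕ} (ξ : Fin r → ℂ) (ν : Fin s → ℂ) : Set (Fin r → ℂ) :=
  {lam | lam ∈ LambdaD ξ ∧
    ∀ (i : Fin r) (j : Fin s) (δ : ℂ), (δ = 1 ∨ δ = -1) → IsHalfInt (ξ i + δ * ν j) →
      (0 < (lam i + δ * ν j).re ↔ 0 < (ξ i + δ * ν j).re)}

section helpers
variable {r : ℕ}

lemma pairing_comm (x y : Fin r → ℂ) : pairing x y = pairing y x :=
  Finset.sum_congr rfl fun _ _ => mul_comm _ _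

lemma pairing_single (η : Fin r → ℂ) (a : Fin r) :
    pairing η (Pi.single a 1) = η a := by
  simp [pairing, Pi.single_apply]

lemma pairing_add_right (η x y : Fin r → ℂ) :
    pairing η (x + y) = pairing η x + pairing η y := by
  simp [pairing, mul_add, Finset.sum_add_distrib]

lemma pairing_sub_right (η x y : Fin r → ℂ) :
    pairing η (x - y) = pairing η x - pairing η y := by
  simp [pairing, mul_sub, Finset.sum_sub_distrib]

lemma pairing_smul_right (η x : Fin r → ℂ) (c : ℂ) :
    pairing η (c • x) = c * pairing η x := by
  simp only [pairing, Pi.smul_apply, smul_eq_mul, Finset.mul_sum]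
  exact Finset.sum_congr rfl fun _ _ => by ring

lemma pairing_sub_single (x β : Fin r → ℂ) (c : ℂ) (i : Fin r) :
    pairing (x - c • (Pi.single i 1 : Fin r → ℂ)) β = pairing x β - c * β i := by
  rw [pairing_comm, pairing_sub_right, pairing_smul_right, pairing_single,
    pairing_comm β x]

lemma corootD_short (a : Fin r) (σ : ℂ) (hσ : σ = 1 ∨ σ = -1) :
    corootD (σ • (Pi.single a 1 : Fin r → ℂ)) = (2:ℂ) • (σ • (Pi.single a 1 : Fin r → ℂ)) := by
  rw [corootD, if_pos ⟨a, σ, hσ, rfl⟩]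

lemma corootD_long (a b : Fin r) (hab : a ≠ b) (σ τ : ℂ)
    (hσ : σ = 1 ∨ σ = -1) (hτ : τ = 1 ∨ τ = -1) :
    corootD (σ • (Pi.single a 1 : Fin r → ℂ) + τ • (Pi.single b 1 : Fin r → ℂ))
      = σ • (Pi.single a 1 : Fin r → ℂ) + τ • (Pi.single b 1 : Fin r → ℂ) := by
  have hσ0 : σ ≠ 0 := by rcases hσ with rfl | rfl <;> norm_num
  have hτ0 : τ ≠ 0 := by rcases hτ with rfl | rfl <;> norm_num
  rw [corootD, if_neg]
  rintro ⟨k, σ', hσ', hk⟩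
  have ha := congrFun hk a
  have hb := congrFun hk b
  simp only [Pi.add_apply, Pi.smul_apply, Pi.single_apply, smul_eq_mul] at ha hb
  by_cases hka : a = k
  · by_cases hkb : b = k
    · exact hab (hka.trans hkb.symm)
    · simp [hab, Ne.symm hab, hkb] at hb
      exact hτ0 hb
  · simp [hab, Ne.symm hab, hka] at ha
    exact hσ0 ha

lemma half_pos_iff (k : ℤ) : 0 < (k:ℝ) + 1/2 ↔ 0 ≤ k := by
  constructor
  · intro h
    by_contra hn
    push_neg at hn
    have : (k:ℝ) ≤ -1 := by exact_mod_cast (by omega : k ≤ -1)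
    linarith
  · intro h
    have : (0:ℝ) ≤ k := by exact_mod_cast h
    linarith

end helpers


lemma tight_contra {r : ℕ} (lam : Fin r → ℂ) (m : Fin r → ℤ) (M : ℕ)
    (habs : ∀ j, (m j).natAbs ≤ M)
    (i b : Fin r) (hmi : m i ≠ 0) (hiM : (m i).natAbs = M)
    (e : ℤ) (he : e = if 0 < m i then 1 else -1)
    (hmin : ∀ j, m j ≠ 0 → (m j).natAbs = M →
      ((e : ℂ) * lam i).re ≤ (((if 0 < m j then 1 else -1 : ℤ) : ℂ) * lam j).re)
    (P : ℕ) (hP : 0 < P) (t : ℤ) (ht : t = 1 ∨ t = -1)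
    (hK : (P : ℤ) + e * m i + t * m b = 1)
    (heq : (e : ℂ) * lam i + (t : ℂ) * lam b = 1) : False := by
  have hbM := habs b
  have hei : (e = 1 ∧ 0 < m i) ∨ (e = -1 ∧ m i < 0) := by
    rcases lt_trichotomy (m i) 0 with h | h | h
    · right; exact ⟨by rw [he, if_neg (by omega)], h⟩
    · exact absurd h hmi
    · left; exact ⟨by rw [he, if_pos h], h⟩
  rcases hei with ⟨rfl, hmi'⟩ | ⟨rfl, hmi'⟩ <;> rcases ht with rfl | rfl
  · -- e = 1, t = 1
    have h1 : m b < 0 ∧ m b ≠ 0 ∧ (m b).natAbs = M := by omega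
    have h2 := hmin b h1.2.1 h1.2.2
    rw [if_neg (not_lt.2 h1.1.le)] at h2
    have h3 : lam b = 1 - lam i := by push_cast at heq; linear_combination heq
    have h4 := congrArg Complex.re h3
    simp [Complex.sub_re] at h2 h4
    linarith
  · -- e = 1, t = -1
    have h1 : 0 < m b ∧ m b ≠ 0 ∧ (m b).natAbs = M := by omega
    have h2 := hmin b h1.2.1 h1.2.2
    rw [if_pos h1.1] at h2
    have h3 : lam b = lam i - 1 := by push_cast at heq; linear_combination -heq
    have h4 := congrArg Complex.re h3
    simp [Complex.sub_re] at h2 h4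
    linarith
  · -- e = -1, t = 1
    have h1 : m b < 0 ∧ m b ≠ 0 ∧ (m b).natAbs = M := by omega
    have h2 := hmin b h1.2.1 h1.2.2
    rw [if_neg (not_lt.2 h1.1.le)] at h2
    have h3 : lam b = 1 + lam i := by push_cast at heq; linear_combination heq
    have h4 := congrArg Complex.re h3
    simp [Complex.add_re] at h2 h4
    linarith
  · -- e = -1, t = -1
    have h1 : 0 < m b ∧ m b ≠ 0 ∧ (m b).natAbs = M := by omega
    have h2 := hmin b h1.2.1 h1.2.2
    rw [if_pos h1.1] at h2
    have h3 : lam b = -1 - lam i := by push_cast at heq; linear_combination -heq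
    have h4 := congrArg Complex.re h3
    simp [Complex.sub_re] at h2 h4
    linarith

lemma step_lemma {r s : ℕ} (ξ : Fin r → ℂ) (ν : Fin s → ℂ)
    (lam : Fin r → ℂ) (hlam : lam ∈ DRegion ξ ν)
    (m : Fin r → ℤ) (hm : lam = ξ + fun k => (m k : ℂ))
    (hne : ∃ i, m i ≠ 0) :
    ∃ i : Fin r, m i ≠ 0 ∧
      (lam - (((if 0 < m i then 1 else -1 : ℤ) : ℂ)) • (Pi.single i 1 : Fin r → ℂ))
        ∈ DRegion ξ ν := by
  classical
  obtain ⟨⟨hlat, hpos⟩, hsign⟩ := hlam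
  have hlamval : ∀ k, lam k = ξ k + (m k : ℂ) := by
    intro k; rw [hm]; rfl
  set A : Finset (Fin r) := Finset.univ.filter (fun j => m j ≠ 0) with hA
  have hAne : A.Nonempty :=
    hne.imp fun i hi => Finset.mem_filter.2 ⟨Finset.mem_univ i, hi⟩
  obtain ⟨M, hMdef⟩ : ∃ M : ℕ, M = A.sup (fun j => (m j).natAbs) := ⟨_, rfl⟩
  have habs : ∀ j, (m j).natAbs ≤ M := by
    intro j
    by_cases h : m j = 0
    · simp [h]
    · rw [hMdef]
      exact Finset.le_sup (f := fun j => (m j).natAbs)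
        (Finset.mem_filter.2 ⟨Finset.mem_univ j, h⟩)
  obtain ⟨j₀, hj₀A, hj₀⟩ := Finset.exists_mem_eq_sup A hAne (fun j => (m j).natAbs)
  set T : Finset (Fin r) := A.filter (fun j => (m j).natAbs = M) with hT
  have hTne : T.Nonempty := ⟨j₀, Finset.mem_filter.2 ⟨hj₀A, by rw [hMdef, hj₀]⟩⟩
  obtain ⟨i, hiT, hminT⟩ := T.exists_min_image
    (fun j => (((if 0 < m j then 1 else -1 : ℤ) : ℂ) * lam j).re) hTne
  have hmi : m i ≠ 0 := (Finset.mem_filter.1 (Finset.mem_filter.1 hiT).1).2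
  have hiM : (m i).natAbs = M := (Finset.mem_filter.1 hiT).2
  have hmin : ∀ j, m j ≠ 0 → (m j).natAbs = M →
      (((if 0 < m i then 1 else -1 : ℤ) : ℂ) * lam i).re ≤
        (((if 0 < m j then 1 else -1 : ℤ) : ℂ) * lam j).re := by
    intro j h1 h2
    exact hminT j (Finset.mem_filter.2 ⟨Finset.mem_filter.2 ⟨Finset.mem_univ j, h1⟩, h2⟩)
  refine ⟨i, hmi, ?_⟩
  obtain ⟨e, he⟩ : ∃ e : ℤ, e = if 0 < m i then 1 else -1 := ⟨_, rfl⟩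
  rw [show ((if 0 < m i then 1 else -1 : ℤ) : ℂ) = ((e : ℤ) : ℂ) from by rw [he]]
  rw [← he] at hmin
  have hee : e = 1 ∨ e = -1 := by
    rw [he]; by_cases h : 0 < m i <;> simp [h]
  have heicase : (e = 1 ∧ 0 < m i) ∨ (e = -1 ∧ m i < 0) := by
    rcases lt_trichotomy (m i) 0 with h | h | h
    · right; exact ⟨by rw [he, if_neg (by omega)], h⟩
    · exact absurd h hmi
    · left; exact ⟨by rw [he, if_pos h], h⟩
  set lam' : Fin r → ℂ := lam - ((e : ℤ) : ℂ) • (Pi.single i 1 : Fin r → ℂ) with hld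
  have hlam'val : ∀ k, lam' k = lam k - (e : ℂ) * (if k = i then 1 else 0) := by
    intro k; simp [hld, Pi.single_apply]
  refine ⟨⟨?_, ?_⟩, ?_⟩
  · -- InLattice
    refine ⟨fun k => m k - (if k = i then e else 0), ?_⟩
    funext k
    rw [hlam'val k, hlamval k]
    simp only [Pi.add_apply]
    push_cast
    split_ifs <;> ring
  · -- DposD
    intro α hα
    obtain ⟨c, hcpos, hc⟩ := hpos α hα
    obtain ⟨hroot, P, hPpos, hPξ⟩ := hα
    rcases hroot with ⟨a, b, hab, σ, τ, hσ, hτ, rfl⟩ | ⟨a, σ, hσ, rfl⟩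
    · -- long root
      obtain ⟨sσ, hsσ, rfl⟩ : ∃ u : ℤ, (u = 1 ∨ u = -1) ∧ σ = (u : ℂ) := by
        rcases hσ with rfl | rfl
        exacts [⟨1, Or.inl rfl, by norm_num⟩, ⟨-1, Or.inr rfl, by norm_num⟩]
      obtain ⟨sτ, hsτ, rfl⟩ : ∃ u : ℤ, (u = 1 ∨ u = -1) ∧ τ = (u : ℂ) := by
        rcases hτ with rfl | rfl
        exacts [⟨1, Or.inl rfl, by norm_num⟩, ⟨-1, Or.inr rfl, by norm_num⟩]
      have hcpair := hc
      rw [corootD_long a b hab.ne _ _ hσ hτ, pairing_comm, pairing_add_right,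
        pairing_smul_right, pairing_smul_right, pairing_single, pairing_single] at hPξ
      rw [pairing_add_right, pairing_smul_right, pairing_smul_right,
        pairing_single, pairing_single] at hc
      obtain ⟨K, hKdef⟩ : ∃ K : ℤ, K = (P : ℤ) + sσ * m a + sτ * m b := ⟨_, rfl⟩
      have hKc : (c : ℂ) = (K : ℂ) := by
        rw [hKdef]
        push_cast
        linear_combination (-1 : ℂ) * hc + hPξ + ((sσ : ℤ) : ℂ) * hlamval a +
          ((sτ : ℤ) : ℂ) * hlamval b
      have hcK : c = (K : ℝ) := by exact_mod_cast hKc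
      have hK1 : 1 ≤ K := by
        have h0 : (0 : ℝ) < (K : ℝ) := hcK ▸ hcpos
        exact_mod_cast h0
      have hvald : pairing lam' (((sσ : ℤ) : ℂ) • (Pi.single a 1 : Fin r → ℂ) +
          ((sτ : ℤ) : ℂ) • (Pi.single b 1 : Fin r → ℂ)) =
          (c : ℂ) - (e : ℂ) * (((sσ : ℤ) : ℂ) * (if i = a then 1 else 0) +
            ((sτ : ℤ) : ℂ) * (if i = b then 1 else 0)) := by
        rw [hld, pairing_sub_single, hcpair]
        simp [Pi.single_apply]
      by_cases hia : i = a
      · have hib : ¬ i = b := fun h => hab.ne (hia.symm.trans h)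
        rw [if_pos hia, if_neg hib, mul_one, mul_zero, add_zero] at hvald
        have hes : e * sσ = 1 ∨ e * sσ = -1 := by
          rcases hee with h | h <;> rcases hsσ with h' | h' <;> simp [h, h']
        rcases hes with hes | hes
        · -- dangerous direction: need K ≥ 2
          have hsσe : sσ = e := by
            rcases hee with h | h <;> rw [h] at hes ⊢ <;> omega
          have hK2 : 2 ≤ K := by
            by_contra hK2
            have hKeq : K = 1 := by omega
            have hma : m i = m a := congrArg m hia
            have hc1 : c = 1 := by rw [hcK, hKeq]; norm_num
            refine tight_contra lam m M habs i b hmi hiM e he hmin P hPpos sτ hsτ ?_ ?_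
            · rw [hma, ← hsσe, ← hKdef]; exact hKeq
            · rw [congrArg lam hia,
                show ((e : ℤ) : ℂ) = ((sσ : ℤ) : ℂ) from by rw [hsσe], hc, hc1]
              norm_num
          have hese : ((e : ℤ) : ℂ) * ((sσ : ℤ) : ℂ) = 1 := by exact_mod_cast hes
          refine ⟨c - 1, by
            rw [hcK]
            have hgt : (1:ℝ) < (K:ℝ) := by exact_mod_cast (by omega : (1:ℤ) < K)
            linarith, ?_⟩
          rw [hvald]
          push_cast
          linear_combination -hese
        · have hese : ((e : ℤ) : ℂ) * ((sσ : ℤ) : ℂ) = -1 := by exact_mod_cast hes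
          refine ⟨c + 1, by linarith, ?_⟩
          rw [hvald]
          push_cast
          linear_combination -hese
      · by_cases hib : i = b
        · rw [if_neg hia, if_pos hib, mul_one, mul_zero, zero_add] at hvald
          have hes : e * sτ = 1 ∨ e * sτ = -1 := by
            rcases hee with h | h <;> rcases hsτ with h' | h' <;> simp [h, h']
          rcases hes with hes | hes
          · have hsτe : sτ = e := by
              rcases hee with h | h <;> rw [h] at hes ⊢ <;> omega
            have hK2 : 2 ≤ K := by
              by_contra hK2
              have hKeq : K = 1 := by omega
              have hmb : m i = m b := congrArg m hib
              have hc1 : c = 1 := by rw [hcK, hKeq]; norm_num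
              refine tight_contra lam m M habs i a hmi hiM e he hmin P hPpos sσ hsσ ?_ ?_
              · rw [hmb, ← hsτe]
                omega
              · rw [congrArg lam hib,
                  show ((e : ℤ) : ℂ) = ((sτ : ℤ) : ℂ) from by rw [hsτe]]
                have h1 : ((sσ : ℤ) : ℂ) * lam a + ((sτ : ℤ) : ℂ) * lam b = 1 := by
                  rw [hc, hc1]; norm_num
                linear_combination h1
            have hese : ((e : ℤ) : ℂ) * ((sτ : ℤ) : ℂ) = 1 := by exact_mod_cast hes
            refine ⟨c - 1, by
            rw [hcK]
            have hgt : (1:ℝ) < (K:ℝ) := by exact_mod_cast (by omega : (1:ℤ) < K)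
            linarith, ?_⟩
            rw [hvald]
            push_cast
            linear_combination -hese
          · have hese : ((e : ℤ) : ℂ) * ((sτ : ℤ) : ℂ) = -1 := by exact_mod_cast hes
            refine ⟨c + 1, by linarith, ?_⟩
            rw [hvald]
            push_cast
            linear_combination -hese
        · rw [if_neg hia, if_neg hib, mul_zero, mul_zero, add_zero, mul_zero,
            sub_zero] at hvald
          exact ⟨c, hcpos, hvald⟩
    · -- short root
      obtain ⟨sσ, hsσ, rfl⟩ : ∃ u : ℤ, (u = 1 ∨ u = -1) ∧ σ = (u : ℂ) := by
        rcases hσ with rfl | rfl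
        exacts [⟨1, Or.inl rfl, by norm_num⟩, ⟨-1, Or.inr rfl, by norm_num⟩]
      have hcpair := hc
      rw [corootD_short a _ hσ, pairing_comm, pairing_smul_right, pairing_smul_right,
        pairing_single] at hPξ
      rw [pairing_smul_right, pairing_single] at hc
      obtain ⟨K, hKdef⟩ : ∃ K : ℤ, K = (P : ℤ) + 2 * (sσ * m a) := ⟨_, rfl⟩
      have hKc : (2 : ℝ) * c = (K : ℝ) := by
        have h2 : ((2 : ℝ) * c : ℂ) = (K : ℂ) := by
          rw [hKdef]
          push_cast
          linear_combination (-2 : ℂ) * hc + hPξ + 2 * ((sσ : ℤ) : ℂ) * hlamval a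
        exact_mod_cast h2
      have hK1 : 1 ≤ K := by
        have h0 : (0 : ℝ) < (K : ℝ) := by rw [← hKc]; linarith
        exact_mod_cast h0
      have hvald : pairing lam' (((sσ : ℤ) : ℂ) • (Pi.single a 1 : Fin r → ℂ)) =
          (c : ℂ) - (e : ℂ) * (((sσ : ℤ) : ℂ) * (if i = a then 1 else 0)) := by
        rw [hld, pairing_sub_single, hcpair]
        simp [Pi.single_apply]
      by_cases hia : i = a
      · rw [if_pos hia, mul_one] at hvald
        have hes : e * sσ = 1 ∨ e * sσ = -1 := by
          rcases hee with h | h <;> rcases hsσ with h' | h' <;> simp [h, h']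
        rcases hes with hes | hes
        · have hsσe : sσ = e := by
            rcases hee with h | h <;> rw [h] at hes ⊢ <;> omega
          have hsm : sσ * m a = e * m i := by rw [hsσe, ← congrArg m hia]
          have hK3 : 3 ≤ K := by
            rcases heicase with ⟨h1, h2⟩ | ⟨h1, h2⟩ <;> rw [h1] at hsm <;> omega
          have hese : ((e : ℤ) : ℂ) * ((sσ : ℤ) : ℂ) = 1 := by exact_mod_cast hes
          refine ⟨c - 1, ?_, ?_⟩
          · have h3 : (3 : ℝ) ≤ (K : ℝ) := by exact_mod_cast hK3
            linarith
          · rw [hvald]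
            push_cast
            linear_combination -hese
        · have hese : ((e : ℤ) : ℂ) * ((sσ : ℤ) : ℂ) = -1 := by exact_mod_cast hes
          refine ⟨c + 1, by linarith, ?_⟩
          rw [hvald]
          push_cast
          linear_combination -hese
      · rw [if_neg hia, mul_zero, mul_zero, sub_zero] at hvald
        exact ⟨c, hcpos, hvald⟩
  · -- fence conditions
    intro i' j δ hδ hhalf
    by_cases hii : i' = i
    · subst hii
      obtain ⟨k, hk⟩ := hhalf
      have hξv : ξ i' + δ * ν j = (((k : ℝ) + 1/2 : ℝ) : ℂ) := by
        push_cast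
        linear_combination hk
      have hlv : lam i' + δ * ν j = ((((k + m i' : ℤ) : ℝ) + 1/2 : ℝ) : ℂ) := by
        push_cast
        linear_combination hk + hlamval i'
      have h5 : lam' i' = lam i' - (e : ℂ) := by
        rw [hlam'val i', if_pos rfl, mul_one]
      have hlv' : lam' i' + δ * ν j = ((((k + m i' - e : ℤ) : ℝ) + 1/2 : ℝ) : ℂ) := by
        push_cast
        linear_combination hk + hlamval i' + h5
      have hold := hsign i' j δ hδ ⟨k, hk⟩
      rw [hξv, hlv] at hold
      rw [hξv, hlv']
      rw [Complex.ofReal_re, Complex.ofReal_re] at hold ⊢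
      rw [half_pos_iff, half_pos_iff] at hold ⊢
      rcases heicase with ⟨h1, h2⟩ | ⟨h1, h2⟩ <;> omega
    · have hsame : lam' i' = lam i' := by
        rw [hlam'val i', if_neg hii, mul_zero, sub_zero]
      rw [hsame]
      exact hsign i' j δ hδ hhalf

lemma chain_key {r s : ℕ} (ξ : Fin r → ℂ) (ν : Fin s → ℂ) :
    ∀ n : ℕ, ∀ lam : Fin r → ℂ, ∀ m : Fin r → ℤ,
      lam = ξ + (fun k => (m k : ℂ)) → (∑ k, (m k).natAbs) = n → lam ∈ DRegion ξ ν →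
      ∃ (N : ℕ) (seq : ℕ → Fin r → ℂ),
        seq 0 = ξ ∧ seq N = lam ∧
        (∀ j, j ≤ N → InLattice ξ (seq j)) ∧
        (∀ j, 1 ≤ j → j ≤ N →
          ∃ i : Fin r, seq j - seq (j-1) = (Pi.single i 1 : Fin r → ℂ) ∨
            seq j - seq (j-1) = -(Pi.single i 1 : Fin r → ℂ)) ∧
        (∀ j, j ≤ N → seq j ∈ DRegion ξ ν) := by
  intro n
  induction n using Nat.strong_induction_on with
  | _ n ih =>
    intro lam m hm hsum hlam
    by_cases h0 : ∀ k, m k = 0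
    · have hlx : lam = ξ := by
        funext k
        rw [hm]
        simp [h0 k]
      refine ⟨0, fun _ => ξ, rfl, hlx.symm ▸ rfl, ?_, ?_, ?_⟩
      · intro j _
        exact ⟨0, by funext k; simp⟩
      · intro j hj1 hj0
        omega
      · intro j _
        exact hlx ▸ hlam
    · push_neg at h0
      obtain ⟨i, hmi, hmem⟩ := step_lemma ξ ν lam hlam m hm h0
      obtain ⟨e, he⟩ : ∃ e : ℤ, e = if 0 < m i then 1 else -1 := ⟨_, rfl⟩
      rw [show ((if 0 < m i then 1 else -1 : ℤ) : ℂ) = ((e : ℤ) : ℂ) from by rw [he]] at hmem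
      have hee : (e = 1 ∧ 0 < m i) ∨ (e = -1 ∧ m i < 0) := by
        rcases lt_trichotomy (m i) 0 with h | h | h
        · right; exact ⟨by rw [he, if_neg (by omega)], h⟩
        · exact absurd h hmi
        · left; exact ⟨by rw [he, if_pos h], h⟩
      set lam' : Fin r → ℂ := lam - ((e : ℤ) : ℂ) • (Pi.single i 1 : Fin r → ℂ) with hld
      set m' : Fin r → ℤ := fun k => m k - (if k = i then e else 0) with hm'def
      have hm' : lam' = ξ + (fun k => (m' k : ℂ)) := by
        funext k
        have h1 : lam' k = lam k - (e : ℂ) * (if k = i then 1 else 0) := by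
          simp [hld, Pi.single_apply]
        rw [h1, hm]
        simp only [Pi.add_apply, hm'def]
        push_cast
        split_ifs <;> ring
      have hsum' : (∑ k, (m' k).natAbs) + 1 = n := by
        rw [← hsum]
        rw [← Finset.sum_erase_add _ _ (Finset.mem_univ i),
          ← Finset.sum_erase_add _ (fun k => (m k).natAbs) (Finset.mem_univ i)]
        have h1 : ∑ k ∈ Finset.univ.erase i, (m' k).natAbs
            = ∑ k ∈ Finset.univ.erase i, (m k).natAbs := by
          refine Finset.sum_congr rfl fun k hk => ?_
          rw [hm'def]
          simp [Finset.mem_erase.1 hk |>.1]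
        rw [h1]
        have h2 : (m' i).natAbs + 1 = (m i).natAbs := by
          have hmv : m' i = m i - e := by simp [hm'def]
          rcases hee with ⟨ha, hb⟩ | ⟨ha, hb⟩ <;> omega
        omega
      obtain ⟨N, seq, hs0, hsN, hlat, hstep, hreg⟩ :=
        ih (∑ k, (m' k).natAbs) (by omega) lam' m' hm' rfl hmem
      refine ⟨N + 1, fun j => if j ≤ N then seq j else lam, ?_, ?_, ?_, ?_, ?_⟩
      · simp [hs0]
      · simp
      · intro j hj
        by_cases hjN : j ≤ N
        · simpa [hjN] using hlat j hjN
        · simp only [if_neg hjN]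
          exact ⟨m, hm⟩
      · intro j hj1 hjN
        by_cases hjN' : j ≤ N
        · have hj1N : j - 1 ≤ N := by omega
          simpa [hjN', hj1N] using hstep j hj1 hjN'
        · have hjeq : j = N + 1 := by omega
          subst hjeq
          have h1 : N + 1 - 1 = N := by omega
          simp only [h1, if_neg (by omega : ¬ N + 1 ≤ N), if_pos le_rfl, hsN]
          refine ⟨i, ?_⟩
          have hdiff : lam - lam' = ((e : ℤ) : ℂ) • (Pi.single i 1 : Fin r → ℂ) := by
            rw [hld]; ring
          rcases hee with ⟨h1, _⟩ | ⟨h1, _⟩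
          · left; rw [hdiff, h1]; push_cast; rw [one_smul]
          · right; rw [hdiff, h1]; push_cast; rw [neg_smul, one_smul]
      · intro j hj
        by_cases hjN : j ≤ N
        · simpa [hjN] using hreg j hjN
        · simp only [if_neg hjN]
          exact hlam

/-- Let ξ ∈ ℂ^r be nonsingular and ν ∈ ℂ^s with (ξ,ν) away from fences.  Then every
λ ∈ 𝒟(ξ,ν) can be connected to ξ by a chain λ^{(0)} = ξ, λ^{(1)}, …, λ^{(N)} = λ of
elements of ξ + ℤ^r with unit steps λ^{(j)} − λ^{(j−1)} ∈ ℰ = {±e_i}, staying in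
𝒟(ξ,ν) throughout. -/
theorem chain_in_interleaving_region {r s : ℕ} (ξ : Fin r → ℂ) (ν : Fin s → ℂ)
    (hξ : Nonsingular ξ) (hfence : AwayFromFences ξ ν)
    (lam : Fin r → ℂ) (hlam : lam ∈ DRegion ξ ν) :
    ∃ (N : ℕ) (seq : ℕ → Fin r → ℂ),
      seq 0 = ξ ∧ seq N = lam ∧
      (∀ j, j ≤ N → InLattice ξ (seq j)) ∧
      (∀ j, 1 ≤ j → j ≤ N →
        ∃ i : Fin r, seq j - seq (j-1) = (Pi.single i 1 : Fin r → ℂ) ∨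
          seq j - seq (j-1) = -(Pi.single i 1 : Fin r → ℂ)) ∧
      (∀ j, j ≤ N → seq j ∈ DRegion ξ ν) := by
  obtain ⟨m, hm⟩ := hlam.1.1
  exact chain_key ξ ν (∑ k, (m k).natAbs) lam m hm rfl hlam
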